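/- arXiv:2006.11898 — 3 statements merged into one kernel-verified Lean document; each statement's English description precedes it below -/
import Mathlib

section
/- The rational subsets of BS(1,q) are not closed under intersection: for every integer q ≥ 2 there exist subsets R₁ and R₂ of GL (Fin 2) ℚ that are rational subsets of BS(1,q) such that R₁ ∩ R₂ is not a rational subset of BS(1,q). -/
open Matrix

/-- The element `a` of `BS(1,q)`, with matrix `!![1, 1; 0, 1]`. -/
noncomputable def aElem : GL (Fin 2) ℚ :=
  Matrix.GeneralLinearGroup.mkOfDetNeZero !![1, 1; 0, 1] (by norm_num [Matrix.det_fin_two_of])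

/-- The element `t` of `BS(1,q)`, with matrix `!![(q : ℚ), 0; 0, 1]`. -/
noncomputable def tElem (q : ℕ) (hq : 2 ≤ q) : GL (Fin 2) ℚ :=
  Matrix.GeneralLinearGroup.mkOfDetNeZero !![(q : ℚ), 0; 0, 1]
    (by
      have hq0 : (q : ℚ) ≠ 0 := by
        simpa using (Nat.cast_ne_zero (R := ℚ)).2 (by omega)
      simp [Matrix.det_fin_two_of, hq0])

/-- `BS(1,q)` as the subgroup of `GL (Fin 2) ℚ` generated by `a` and `t`. -/
noncomputable def BS (q : ℕ) (hq : 2 ≤ q) : Subgroup (GL (Fin 2) ℚ) :=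
  Subgroup.closure {aElem, tElem q hq}

/-- `R` is a rational subset of `BS(1,q)`. -/
def IsRationalSubset (q : ℕ) (hq : 2 ≤ q) (R : Set (GL (Fin 2) ℚ)) : Prop :=
  ∃ (ι : Type) (_ : Fintype ι) (L : Language ι) (f : ι → GL (Fin 2) ℚ),
    L.IsRegular ∧ (∀ i : ι, f i ∈ BS q hq) ∧
    R = {g : GL (Fin 2) ℚ | ∃ w ∈ L, (w.map f).prod = g}

/-!
Let `R₁ = t* a (t⁻¹)*`, the set of products `tᵐ a t⁻ⁿ`, and `R₂ = a*`. Both are rational, and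
since `tᵐ a t⁻ⁿ` is the affine map `x ↦ qᵐ⁻ⁿ x + qᵐ`, their intersection is `{a^(qⁿ) | n ∈ ℕ}`.
Suppose this set were the image of a regular language. Pumping an accepted word `xyz` puts
`p rʲ s` in the set for every `j`; conjugating by `p` turns `r` into a power of `a`, so the
exponents `q^n₀, q^n₁, q^n₂` of `p s, p r s, p r² s` form an arithmetic progression, which forces
`r = 1`. Hence every element is the product of a word shorter than the number of states, and the
infinite set would be finite.
-/

namespace Language

variable {α ι M : Type*}

theorem isRegular_of_leftQuotient_mem (S : Set (Language α)) (hS : S.Finite) {L : Language α}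
    (hL : L ∈ S) (hstep : ∀ K ∈ S, ∀ a, K.leftQuotient [a] ∈ S) : L.IsRegular := by
  refine IsRegular.of_finite_range_leftQuotient (hS.subset ?_)
  rintro _ ⟨w, rfl⟩
  induction w using List.reverseRecOn with
  | nil => exact hL
  | append_singleton w a ih => rw [leftQuotient_append]; exact hstep _ ih a

theorem top_isRegular : (⊤ : Language α).IsRegular :=
  isRegular_of_leftQuotient_mem {⊤} (Set.finite_singleton _) rfl fun K hK a => by
    rw [hK]; ext; exact iff_of_true trivial trivial

def prodImage [Monoid M] (L : Language ι) (f : ι → M) : Set M :=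
  {g | ∃ w ∈ L, (w.map f).prod = g}

theorem prodImage_top_const [Monoid M] (g : M) :
    (⊤ : Language Unit).prodImage (fun _ => g) = Set.range (g ^ ·) := by
  ext x
  constructor
  · rintro ⟨w, -, rfl⟩
    exact ⟨w.length, by simp [List.map_const']⟩
  · rintro ⟨n, rfl⟩
    exact ⟨List.replicate n (), trivial, by simp⟩

theorem _root_.DFA.exists_short_word_prod_eq [Monoid M] {σ : Type*} [Fintype σ]
    (D : DFA ι σ) (f : ι → M)
    (hpump : ∀ p r s : M, (∀ j : ℕ, p * r ^ j * s ∈ D.accepts.prodImage f) → p * r * s = p * s)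
    {w : List ι} (hw : w ∈ D.accepts) :
    ∃ v : List ι, v.length < Fintype.card σ ∧ (v.map f).prod = (w.map f).prod := by
  induction hlen : w.length using Nat.strong_induction_on generalizing w with
  | _ n ih =>
    by_cases hshort : w.length < Fintype.card σ
    · exact ⟨w, hshort, rfl⟩
    obtain ⟨x, y, z, rfl, -, hy, hsub⟩ := D.pumping_lemma hw (not_lt.1 hshort)
    have hmem (j : ℕ) : x ++ (List.replicate j y).flatten ++ z ∈ D.accepts :=
      hsub <| append_mem_mul (append_mem_mul rfl <|
        join_mem_kstar fun _ h => List.eq_of_mem_replicate h) rfl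
    have hprod (j : ℕ) : ((x ++ (List.replicate j y).flatten ++ z).map f).prod =
        (x.map f).prod * (y.map f).prod ^ j * (z.map f).prod := by
      simp [List.prod_flatten, List.map_flatten, mul_assoc]
    have hskip := hpump _ _ _ fun j => ⟨_, hmem j, hprod j⟩
    obtain ⟨v, hv, hvw⟩ := ih (x ++ z).length
      (by simp only [← hlen, List.length_append]; have := List.length_pos_iff.2 hy; omega)
      (by simpa using hmem 0) rfl
    exact ⟨v, hv, by rw [hvw]; simpa [mul_assoc] using hskip.symm⟩

theorem IsRegular.finite_prodImage [Monoid M] [Finite ι] {L : Language ι} (hL : L.IsRegular)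
    (f : ι → M)
    (hpump : ∀ p r s : M, (∀ j : ℕ, p * r ^ j * s ∈ L.prodImage f) → p * r * s = p * s) :
    (L.prodImage f).Finite := by
  obtain ⟨σ, _, D, rfl⟩ := hL
  refine ((List.finite_length_lt ι (Fintype.card σ)).image fun v => (v.map f).prod).subset ?_
  rintro _ ⟨w, hw, rfl⟩
  exact D.exists_short_word_prod_eq f hpump hw

end Language

theorem Nat.eq_of_pow_add_pow_eq_two_mul_pow {q a b c : ℕ} (hq : 2 ≤ q)
    (h : q ^ a + q ^ c = 2 * q ^ b) : a = c := by
  wlog hac : a < c generalizing a c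
  · rcases (not_lt.1 hac).lt_or_eq with hca | hca
    · exact (this (by omega) hca).symm
    · exact hca.symm
  have hpos : 0 < q ^ a := by positivity
  rcases lt_or_ge b c with hbc | hcb
  · have : 2 * q ^ b ≤ q ^ c := calc
      2 * q ^ b ≤ q * q ^ b := Nat.mul_le_mul_right _ hq
      _ = q ^ (b + 1) := (pow_succ' ..).symm
      _ ≤ q ^ c := Nat.pow_le_pow_right (by omega) hbc
    omega
  · have := Nat.pow_lt_pow_right hq hac
    have := Nat.pow_le_pow_right (n := q) (by omega) hcb
    omega

theorem eq_one_of_forall_mul_pow_mul_mem_range_pow {G κ : Type*} [Group G] {a : G}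
    (ha : ¬IsOfFinOrder a) {c : κ → ℕ} (hc : ∀ i j k, c i + c k = 2 * c j → c i = c k)
    {p r s : G} (h : ∀ n : ℕ, p * r ^ n * s ∈ Set.range fun i => a ^ c i) : r = 1 := by
  obtain ⟨i, hi⟩ := h 0
  obtain ⟨j, hj⟩ := h 1
  obtain ⟨k, hk⟩ := h 2
  simp only [pow_zero, mul_one, pow_one] at hi hj hk
  have hconj : p * r * p⁻¹ = a ^ ((c j : ℤ) - c i) := by
    simp only [_root_.zpow_sub, zpow_natCast, hi, hj]; group
  have hk' : a ^ (c k : ℤ) = a ^ (2 * ((c j : ℤ) - c i) + c i) := by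
    rw [zpow_natCast, hk, _root_.zpow_add, _root_.zpow_mul', ← hconj, zpow_natCast, hi,
      zpow_two, pow_two]
    group
  have hprog := injective_zpow_iff_not_isOfFinOrder.2 ha hk'
  have hik := hc i j k (by omega)
  rw [← conj_eq_one_iff (a := p), hconj]
  simp [show c j = c i by omega]

section AffineMatrix

variable {R : Type*} [CommRing R]

def affineMatrix (u b : R) : Matrix (Fin 2) (Fin 2) R := !![u, b; 0, 1]

theorem affineMatrix_mul (u b v c : R) :
    affineMatrix u b * affineMatrix v c = affineMatrix (u * v) (u * c + b) := by
  ext i j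
  fin_cases i <;> fin_cases j <;> simp [affineMatrix, Matrix.mul_apply, Fin.sum_univ_two]

theorem affineMatrix_one_zero : affineMatrix (1 : R) 0 = 1 := by
  simp [affineMatrix, Matrix.one_fin_two]

theorem affineMatrix_inj {u b v c : R} :
    affineMatrix u b = affineMatrix v c ↔ u = v ∧ b = c := by
  refine ⟨fun h => ⟨congrFun (congrFun h 0) 0, congrFun (congrFun h 0) 1⟩, ?_⟩
  rintro ⟨rfl, rfl⟩; rfl

theorem affineMatrix_one_left_pow (b : R) (n : ℕ) :
    affineMatrix 1 b ^ n = affineMatrix 1 (n * b) := by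
  induction n with
  | zero => simp [affineMatrix_one_zero]
  | succ n ih => rw [pow_succ, ih, affineMatrix_mul]; push_cast; ring_nf

theorem affineMatrix_zero_right_pow (u : R) (n : ℕ) :
    affineMatrix u 0 ^ n = affineMatrix (u ^ n) 0 := by
  induction n with
  | zero => simp [affineMatrix_one_zero]
  | succ n ih => rw [pow_succ, ih, affineMatrix_mul]; simp [pow_succ]

theorem affineMatrix_zero_right_inv {K : Type*} [Field K] {u : K} (hu : u ≠ 0) :
    (affineMatrix u 0)⁻¹ = affineMatrix u⁻¹ 0 :=
  Matrix.inv_eq_left_inv <| by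
    rw [affineMatrix_mul, inv_mul_cancel₀ hu, mul_zero, zero_add, affineMatrix_one_zero]

end AffineMatrix

theorem coe_aElem : (aElem : Matrix (Fin 2) (Fin 2) ℚ) = affineMatrix 1 1 := rfl

theorem coe_aElem_pow (n : ℕ) :
    ((aElem ^ n : GL (Fin 2) ℚ) : Matrix (Fin 2) (Fin 2) ℚ) = affineMatrix 1 (n : ℚ) := by
  rw [Units.val_pow_eq_pow_val, coe_aElem, affineMatrix_one_left_pow, mul_one]

theorem not_isOfFinOrder_aElem : ¬IsOfFinOrder aElem := by
  rw [isOfFinOrder_iff_pow_eq_one]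
  rintro ⟨n, hn, h⟩
  have := congrArg Units.val h
  rw [coe_aElem_pow, Units.val_one, ← affineMatrix_one_zero, affineMatrix_inj] at this
  exact hn.ne' (by exact_mod_cast this.2)

section tElem

variable (q : ℕ) (hq : 2 ≤ q)

theorem coe_tElem : (tElem q hq : Matrix (Fin 2) (Fin 2) ℚ) = affineMatrix (q : ℚ) 0 := rfl

theorem coe_tElem_pow (n : ℕ) :
    ((tElem q hq ^ n : GL (Fin 2) ℚ) : Matrix (Fin 2) (Fin 2) ℚ) =
      affineMatrix ((q : ℚ) ^ n) 0 := by
  rw [Units.val_pow_eq_pow_val, coe_tElem, affineMatrix_zero_right_pow]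

theorem coe_tElem_pow_mul_aElem_mul_inv_pow (m n : ℕ) :
    ((tElem q hq ^ m * aElem * (tElem q hq)⁻¹ ^ n : GL (Fin 2) ℚ) : Matrix (Fin 2) (Fin 2) ℚ) =
      affineMatrix ((q : ℚ) ^ m * ((q : ℚ) ^ n)⁻¹) ((q : ℚ) ^ m) := by
  have hq0 : (q : ℚ) ≠ 0 := by exact_mod_cast (show q ≠ 0 by omega)
  rw [inv_pow, Units.val_mul, Units.val_mul, Matrix.GeneralLinearGroup.coe_inv, coe_tElem_pow,
    coe_tElem_pow, coe_aElem, affineMatrix_zero_right_inv (pow_ne_zero n hq0), affineMatrix_mul,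
    affineMatrix_mul]
  simp

end tElem

section Words

def replicateWords {α : Type*} (c : α) : Language α := {w | ∃ n, w = List.replicate n c}

def conjWords : Language (Fin 3) := {w | ∃ m n, w = List.replicate m 0 ++ 1 :: List.replicate n 2}

theorem cons_mem_replicateWords {α : Type*} {a c : α} {w : List α} :
    a :: w ∈ replicateWords c ↔ a = c ∧ w ∈ replicateWords c := by
  constructor
  · rintro ⟨_ | n, h⟩
    · simp at h
    · simp only [List.replicate_succ, List.cons.injEq] at h
      exact ⟨h.1, n, h.2⟩
  · rintro ⟨rfl, n, rfl⟩
    exact ⟨n + 1, rfl⟩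

theorem cons_mem_conjWords {a : Fin 3} {w : List (Fin 3)} :
    a :: w ∈ conjWords ↔ a = 0 ∧ w ∈ conjWords ∨ a = 1 ∧ w ∈ replicateWords 2 := by
  constructor
  · rintro ⟨_ | m, n, h⟩
    · simp only [List.replicate_zero, List.nil_append, List.cons.injEq] at h
      exact Or.inr ⟨h.1, n, h.2⟩
    · simp only [List.replicate_succ, List.cons_append, List.cons.injEq] at h
      exact Or.inl ⟨h.1, m, n, h.2⟩
  · rintro (⟨rfl, m, n, rfl⟩ | ⟨rfl, n, rfl⟩)
    exacts [⟨m + 1, n, rfl⟩, ⟨0, n, rfl⟩]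

theorem leftQuotient_replicateWords {α : Type*} [DecidableEq α] (c a : α) :
    (replicateWords c).leftQuotient [a] = if a = c then replicateWords c else 0 := by
  ext w
  split_ifs with h <;> simp [cons_mem_replicateWords, h, Language.notMem_zero]

theorem leftQuotient_conjWords (a : Fin 3) :
    conjWords.leftQuotient [a] =
      if a = 0 then conjWords else if a = 1 then replicateWords 2 else 0 := by
  ext w
  split_ifs <;> simp_all [cons_mem_conjWords, Language.notMem_zero]

theorem conjWords_isRegular : conjWords.IsRegular := by
  refine Language.isRegular_of_leftQuotient_mem {conjWords, replicateWords 2, 0}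
    (Set.toFinite _) (by simp) ?_
  rintro K (rfl | rfl | rfl) a
  · rw [leftQuotient_conjWords]; split_ifs <;> simp
  · rw [leftQuotient_replicateWords]; split_ifs <;> simp
  · right; right; ext w; simp [Language.notMem_zero]

theorem prodImage_conjWords {M : Type*} [Monoid M] (x y z : M) :
    conjWords.prodImage ![x, y, z] = {g | ∃ m n : ℕ, x ^ m * y * z ^ n = g} := by
  ext g
  constructor
  · rintro ⟨w, ⟨m, n, rfl⟩, rfl⟩
    exact ⟨m, n, by simp [mul_assoc]⟩
  · rintro ⟨m, n, rfl⟩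
    exact ⟨_, ⟨m, n, rfl⟩, by simp [mul_assoc]⟩

end Words

section Intersection

variable (q : ℕ) (hq : 2 ≤ q)

theorem aElem_mem_BS : aElem ∈ BS q hq := Subgroup.subset_closure (by simp)

theorem tElem_mem_BS : tElem q hq ∈ BS q hq := Subgroup.subset_closure (by simp)

theorem conj_products_inter_aElem_powers :
    {g | ∃ m n : ℕ, tElem q hq ^ m * aElem * (tElem q hq)⁻¹ ^ n = g} ∩ Set.range (aElem ^ ·) =
      Set.range fun n => aElem ^ q ^ n := by
  have hq0 : (q : ℚ) ≠ 0 := by exact_mod_cast (show q ≠ 0 by omega)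
  ext g
  constructor
  · rintro ⟨⟨m, n, rfl⟩, k, hk⟩
    have := congrArg Units.val hk
    rw [coe_aElem_pow, coe_tElem_pow_mul_aElem_mul_inv_pow, affineMatrix_inj] at this
    have hk' : k = q ^ m := by exact_mod_cast this.2
    refine ⟨m, ?_⟩
    rw [← hk]
    simp only [hk']
  · rintro ⟨n, rfl⟩
    refine ⟨⟨n, n, Units.ext ?_⟩, q ^ n, rfl⟩
    rw [coe_tElem_pow_mul_aElem_mul_inv_pow, coe_aElem_pow, mul_inv_cancel₀ (pow_ne_zero n hq0)]
    push_cast; rfl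

theorem not_isRationalSubset_range_aElem_pow_pow :
    ¬IsRationalSubset q hq (Set.range fun n => aElem ^ q ^ n) := by
  rintro ⟨ι, _, L, f, hL, -, hR⟩
  change _ = L.prodImage f at hR
  have hfinite : (L.prodImage f).Finite := hL.finite_prodImage f fun p r s h => by
    have hr : r = 1 := eq_one_of_forall_mul_pow_mul_mem_range_pow (c := (q ^ ·))
      not_isOfFinOrder_aElem
      (fun _ _ _ hprog => congrArg (q ^ ·) (Nat.eq_of_pow_add_pow_eq_two_mul_pow hq hprog))
      (hR ▸ h)
    rw [hr, mul_one]
  have hinj : Function.Injective fun n => aElem ^ q ^ n :=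
    (injective_pow_iff_not_isOfFinOrder.2 not_isOfFinOrder_aElem).comp (Nat.pow_right_injective hq)
  exact Set.infinite_range_of_injective hinj (hR ▸ hfinite)

end Intersection

/-- The rational subsets of `BS(1,q)` are not closed under intersection. -/
theorem rational_subsets_not_closed_under_intersection (q : ℕ) (hq : 2 ≤ q) :
    ∃ R₁ R₂ : Set (GL (Fin 2) ℚ),
      IsRationalSubset q hq R₁ ∧ IsRationalSubset q hq R₂ ∧
      ¬ IsRationalSubset q hq (R₁ ∩ R₂) := by
  refine ⟨conjWords.prodImage ![tElem q hq, aElem, (tElem q hq)⁻¹],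
    (⊤ : Language Unit).prodImage fun _ => aElem,
    ⟨Fin 3, inferInstance, _, _, conjWords_isRegular, ?_, rfl⟩,
    ⟨Unit, inferInstance, ⊤, _, Language.top_isRegular, fun _ => aElem_mem_BS q hq, rfl⟩, ?_⟩
  · intro i
    fin_cases i
    exacts [tElem_mem_BS q hq, aElem_mem_BS q hq, inv_mem (tElem_mem_BS q hq)]
  · rw [prodImage_conjWords, Language.prodImage_top_const, conj_products_inter_aElem_powers]
    exact not_isRationalSubset_range_aElem_pow_pow q hq
end

section
/- Matrix description of BS(1,q): for every integer q ≥ 2, the subgroup BS(1,q) of GL (Fin 2) ℚ equals the set of all M ∈ GL (Fin 2) ℚ for which there exist m : ℤ and r : ℚ with r ∈ Z[1/q] such that the matrix of M is !![(q : ℚ)^m, r; 0, 1]. -/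
open Matrix

/-- `Z[1/q]`: the rationals of the form `n / q^i`. -/
def ZOneOverQ (q : ℕ) : Set ℚ := {x : ℚ | ∃ (n : ℤ) (i : ℕ), x = (n : ℚ) / (q : ℚ) ^ i}

/-!
The matrices `!![q^m, r; 0, 1]` with `m ∈ ℤ`, `r ∈ Z[1/q]` form a subgroup of `GL (Fin 2) ℚ`
(since `Z[1/q]` is an additive group stable under multiplication by `q^{±1}`) which contains
`a` and `t`, hence contains `BS(1,q)`. Conversely, every such matrix is a product of generators:
`!![q^m, n/q^i; 0, 1] = t^(-i) * a^n * t^(i+m)`.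
-/

section AffineMatrix

theorem affine_mul_affine {R : Type*} [Semiring R] (a b c d : R) :
    !![a, b; 0, 1] * !![c, d; 0, 1] = !![a * c, a * d + b; 0, 1] := by
  simp

variable {K : Type*} [Field K]

theorem Matrix.GeneralLinearGroup.coe_inv_of_coe_eq_affine {M : GL (Fin 2) K} {x r : K} (hx : x ≠ 0)
    (hM : (M : Matrix (Fin 2) (Fin 2) K) = !![x, r; 0, 1]) :
    ((M⁻¹ : GL (Fin 2) K) : Matrix (Fin 2) (Fin 2) K) = !![x⁻¹, -(x⁻¹ * r); 0, 1] := by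
  rw [Matrix.coe_units_inv, hM]
  refine Matrix.inv_eq_right_inv ?_
  rw [affine_mul_affine, Matrix.one_fin_two, mul_inv_cancel₀ hx, mul_neg, mul_inv_cancel_left₀ hx,
    neg_add_cancel]

end AffineMatrix

namespace ZOneOverQ

variable {q : ℕ} {x y : ℚ}

theorem add_mem (hq : q ≠ 0) (hx : x ∈ ZOneOverQ q) (hy : y ∈ ZOneOverQ q) :
    x + y ∈ ZOneOverQ q := by
  obtain ⟨n, i, rfl⟩ := hx
  obtain ⟨n', j, rfl⟩ := hy
  refine ⟨n * q ^ j + n' * q ^ i, i + j, ?_⟩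
  field_simp [Nat.cast_ne_zero.2 hq]
  push_cast
  ring

theorem neg_mem (hx : x ∈ ZOneOverQ q) : -x ∈ ZOneOverQ q := by
  obtain ⟨n, i, rfl⟩ := hx
  exact ⟨-n, i, by push_cast; ring⟩

theorem zpow_mul_mem (hq : q ≠ 0) (m : ℤ) (hx : x ∈ ZOneOverQ q) :
    (q : ℚ) ^ m * x ∈ ZOneOverQ q := by
  obtain ⟨n, i, rfl⟩ := hx
  obtain ⟨k, rfl | rfl⟩ := Int.eq_nat_or_neg m
  · exact ⟨n * q ^ k, i, by rw [zpow_natCast]; push_cast; ring⟩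
  · refine ⟨n, i + k, ?_⟩
    rw [_root_.zpow_neg, zpow_natCast, pow_add]
    field_simp [Nat.cast_ne_zero.2 hq]

end ZOneOverQ

def affineSubgroup (q : ℕ) (hq : q ≠ 0) : Subgroup (GL (Fin 2) ℚ) where
  carrier := {M | ∃ (m : ℤ) (r : ℚ), r ∈ ZOneOverQ q ∧
    (M : Matrix (Fin 2) (Fin 2) ℚ) = !![(q : ℚ) ^ m, r; 0, 1]}
  one_mem' := ⟨0, 0, ⟨0, 0, by simp⟩, by simp [Matrix.one_fin_two]⟩
  mul_mem' := by
    rintro M N ⟨m, r, hr, hM⟩ ⟨m', r', hr', hN⟩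
    refine ⟨m + m', (q : ℚ) ^ m * r' + r,
      ZOneOverQ.add_mem hq (ZOneOverQ.zpow_mul_mem hq m hr') hr, ?_⟩
    rw [Units.val_mul, hM, hN, affine_mul_affine, zpow_add₀ (Nat.cast_ne_zero.2 hq)]
  inv_mem' := by
    rintro M ⟨m, r, hr, hM⟩
    refine ⟨-m, (q : ℚ) ^ (-m) * -r, ZOneOverQ.zpow_mul_mem hq (-m) (ZOneOverQ.neg_mem hr), ?_⟩
    rw [GeneralLinearGroup.coe_inv_of_coe_eq_affine (zpow_ne_zero m (Nat.cast_ne_zero.2 hq)) hM,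
      _root_.zpow_neg, mul_neg]

theorem coe_aElem_zpow (n : ℤ) :
    ((aElem ^ n : GL (Fin 2) ℚ) : Matrix (Fin 2) (Fin 2) ℚ) = !![1, (n : ℚ); 0, 1] := by
  have ha : (aElem : Matrix (Fin 2) (Fin 2) ℚ) = !![1, 1; 0, 1] := rfl
  induction n using Int.induction_on with
  | zero => simp [Matrix.one_fin_two]
  | succ k ih =>
    rw [_root_.zpow_add_one, Units.val_mul, ih, ha, affine_mul_affine]
    push_cast
    simp [add_comm]
  | pred k ih =>
    rw [_root_.zpow_sub_one, Units.val_mul, ih,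
      GeneralLinearGroup.coe_inv_of_coe_eq_affine one_ne_zero ha, affine_mul_affine]
    push_cast
    simp [sub_eq_neg_add]

theorem coe_tElem_zpow (q : ℕ) (hq : 2 ≤ q) (m : ℤ) :
    ((tElem q hq ^ m : GL (Fin 2) ℚ) : Matrix (Fin 2) (Fin 2) ℚ) = !![(q : ℚ) ^ m, 0; 0, 1] := by
  have hq' : (q : ℚ) ≠ 0 := by positivity
  have ht : (tElem q hq : Matrix (Fin 2) (Fin 2) ℚ) = !![(q : ℚ), 0; 0, 1] := rfl
  induction m using Int.induction_on with
  | zero => simp [Matrix.one_fin_two]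
  | succ k ih =>
    rw [_root_.zpow_add_one, Units.val_mul, ih, ht, affine_mul_affine, zpow_add_one₀ hq']
    simp
  | pred k ih =>
    rw [_root_.zpow_sub_one, Units.val_mul, ih,
      GeneralLinearGroup.coe_inv_of_coe_eq_affine hq' ht, affine_mul_affine, zpow_sub_one₀ hq']
    simp

theorem BS_le_affineSubgroup (q : ℕ) (hq : 2 ≤ q) : BS q hq ≤ affineSubgroup q (by omega) := by
  refine Subgroup.closure_le _ |>.2 (Set.insert_subset_iff.2 ⟨?_, Set.singleton_subset_iff.2 ?_⟩)
  · exact ⟨0, 1, ⟨1, 0, by simp⟩, by simp [aElem]⟩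
  · exact ⟨1, 0, ⟨0, 0, by simp⟩, by simp [tElem]⟩

theorem affineSubgroup_le_BS (q : ℕ) (hq : 2 ≤ q) : affineSubgroup q (by omega) ≤ BS q hq := by
  rintro M ⟨m, _, ⟨n, i, rfl⟩, hM⟩
  have hq' : (q : ℚ) ≠ 0 := by positivity
  have hconj : M = tElem q hq ^ (-(i : ℤ)) * aElem ^ n * tElem q hq ^ ((i : ℤ) + m) := by
    ext1
    rw [hM, Units.val_mul, Units.val_mul, coe_tElem_zpow, coe_tElem_zpow, coe_aElem_zpow,
      affine_mul_affine, affine_mul_affine, mul_one, ← zpow_add₀ hq', neg_add_cancel_left,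
      _root_.zpow_neg, zpow_natCast]
    simp [div_eq_inv_mul]
  have ha : aElem ∈ BS q hq := Subgroup.subset_closure (by simp)
  have ht : tElem q hq ∈ BS q hq := Subgroup.subset_closure (by simp)
  rw [hconj]
  exact mul_mem (mul_mem (zpow_mem ht _) (zpow_mem ha _)) (zpow_mem ht _)

/-- Matrix description of `BS(1,q)`: it consists exactly of the invertible matrices
`!![q^m, r; 0, 1]` with `m : ℤ` and `r ∈ Z[1/q]`. -/
theorem BS_eq_matrix_description (q : ℕ) (hq : 2 ≤ q) :
    (BS q hq : Set (GL (Fin 2) ℚ)) =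
      {M : GL (Fin 2) ℚ | ∃ (m : ℤ) (r : ℚ), r ∈ ZOneOverQ q ∧
        (M : Matrix (Fin 2) (Fin 2) ℚ) = !![(q : ℚ) ^ m, r; 0, 1]} :=
  congrArg SetLike.coe
    (le_antisymm (BS_le_affineSubgroup q hq) (affineSubgroup_le_BS q hq))
end

section
/- Let k, ℓ, m : ℕ, let d : Fin k → ℕ be nondecreasing with 1 ≤ d i for all i, and let e : Fin ℓ → ℕ be strictly increasing with 1 ≤ e j for all j. If ∑ i : Fin k, (1 + 2^(−(d i : ℤ))) = (m : ℚ) + ∑ j : Fin ℓ, 2^(−(e j : ℤ)) as an equality in ℚ, then k ≥ ℓ. -/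
/-!
Multiplying by `2 ^ N` for large `N` turns the identity into
`2^N k + ∑ 2^(N - d i) = 2^N m + ∑ 2^(N - e j)` in `ℕ`. Modulo `2^N` the right side is a sum of
`ℓ` distinct powers of two below `2^N`, so its binary digit sum is `ℓ`. Reducing modulo `2^N`
cannot increase the digit sum, and the left side, a sum of `k` powers of two, has digit sum at
most `k` because digit sums are subadditive.
-/

open Finset

namespace Nat

theorem digits_sum_add_le (p : ℕ) [Fact p.Prime] (a b : ℕ) :
    (p.digits (a + b)).sum ≤ (p.digits a).sum + (p.digits b).sum := by
  -- Legendre: `(p - 1) * v_p(n!) = n - s_p(n)`, and `v_p(a!) + v_p(b!) ≤ v_p((a + b)!)`.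
  obtain ⟨c, hc⟩ := factorial_mul_factorial_dvd_factorial_add a b
  have hc0 : c ≠ 0 := by rintro rfl; simp [factorial_ne_zero] at hc
  have hval :
      padicValNat p a ! + padicValNat p b ! + padicValNat p c = padicValNat p (a + b)! := by
    rw [hc, padicValNat.mul (by positivity) hc0, padicValNat.mul (by positivity) (by positivity)]
  have hlegendre := congrArg (fun v => (p - 1) * v) hval
  simp only [mul_add, sub_one_mul_padicValNat_factorial] at hlegendre
  have := digit_sum_le p a
  have := digit_sum_le p b
  have := digit_sum_le p (a + b)
  omega

theorem digits_sum_add_base_pow_mul {b N r : ℕ} (hb : 1 < b) (hr : r < b ^ N) (q : ℕ) :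
    (b.digits (r + b ^ N * q)).sum = (b.digits r).sum + (b.digits q).sum := by
  rcases q.eq_zero_or_pos with rfl | hq
  · simp
  obtain ⟨z, rfl⟩ := exists_add_of_le ((digits_length_le_iff hb r).2 hr)
  rw [← digits_append_zeroes_append_digits hb hq]
  simp

theorem digits_sum_mod_base_pow_le {b : ℕ} (hb : 1 < b) (n N : ℕ) :
    (b.digits (n % b ^ N)).sum ≤ (b.digits n).sum := by
  conv_rhs => rw [← mod_add_div n (b ^ N)]
  rw [digits_sum_add_base_pow_mul hb (mod_lt _ (by positivity))]
  exact le_add_right _ _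

theorem digits_sum_sum_base_pow {b : ℕ} (hb : 1 < b) (s : Finset ℕ) :
    (b.digits (∑ i ∈ s, b ^ i)).sum = #s := by
  classical
  induction s using Finset.induction_on_max with
  | empty => simp
  | insert a s hlt ih =>
    rw [sum_insert (fun h => (hlt a h).false), card_insert_of_notMem (fun h => (hlt a h).false),
      add_comm, ← mul_one (b ^ a), digits_sum_add_base_pow_mul hb (geomSum_lt hb hlt), ih,
      digits_of_lt b 1 one_ne_zero hb]
    simp

theorem digits_sum_sum_prime_pow_le (p : ℕ) [hp : Fact p.Prime] {ι : Type*} (s : Finset ι)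
    (f : ι → ℕ) : (p.digits (∑ i ∈ s, p ^ f i)).sum ≤ #s := by
  have hpow (a : ℕ) : (p.digits (p ^ a)).sum = 1 := by
    simpa using digits_sum_sum_base_pow hp.out.one_lt {a}
  simpa [hpow] using le_sum_of_subadditive (fun n => (p.digits n).sum) (by simp)
    (digits_sum_add_le p) s (fun i => p ^ f i)

theorem card_le_card_of_sum_prime_pow_modEq (p : ℕ) [hp : Fact p.Prime] {ι κ : Type*}
    {s : Finset ι} {t : Finset κ} {f : ι → ℕ} {g : κ → ℕ} {N : ℕ} (hg : Set.InjOn g t)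
    (hgN : ∀ j ∈ t, g j < N) (h : ∑ i ∈ s, p ^ f i ≡ ∑ j ∈ t, p ^ g j [MOD p ^ N]) :
    #t ≤ #s := by
  classical
  rw [← sum_image hg] at h
  have hlt : ∑ j ∈ t.image g, p ^ j < p ^ N := geomSum_lt hp.out.two_le (by simpa using hgN)
  calc #t = #(t.image g) := (Finset.card_image_of_injOn hg).symm
    _ = (p.digits (∑ j ∈ t.image g, p ^ j)).sum := (digits_sum_sum_base_pow hp.out.one_lt _).symm
    _ = (p.digits ((∑ i ∈ s, p ^ f i) % p ^ N)).sum := by rw [h, mod_eq_of_lt hlt]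
    _ ≤ (p.digits (∑ i ∈ s, p ^ f i)).sum := digits_sum_mod_base_pow_le hp.out.one_lt _ N
    _ ≤ #s := digits_sum_sum_prime_pow_le p s f

end Nat

theorem zpow_mul_sum_zpow_neg {K : Type*} [Field K] {b : K} (hb : b ≠ 0) {ι : Type*}
    (s : Finset ι) (f : ι → ℕ) {N : ℕ} (hf : ∀ i ∈ s, f i ≤ N) :
    b ^ N * ∑ i ∈ s, b ^ (-(f i : ℤ)) = ∑ i ∈ s, b ^ (N - f i) := by
  rw [mul_sum]
  refine sum_congr rfl fun i hi => ?_
  rw [← zpow_natCast, ← zpow_add₀ hb, ← zpow_natCast, Nat.cast_sub (hf i hi), sub_eq_add_neg]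

theorem summing_up_12_general (k ℓ m : ℕ) (d : Fin k → ℕ)
    (e : Fin ℓ → ℕ) (he : StrictMono e) (he1 : ∀ j, 1 ≤ e j)
    (heq : ∑ i : Fin k, ((1 : ℚ) + 2 ^ (-(d i : ℤ))) =
           (m : ℚ) + ∑ j : Fin ℓ, (2 : ℚ) ^ (-(e j : ℤ))) :
    ℓ ≤ k := by
  set N := univ.sup d ⊔ univ.sup e
  have hdN : ∀ i ∈ univ, d i ≤ N := fun i hi => (le_sup hi).trans le_sup_left
  have heN : ∀ j ∈ univ, e j ≤ N := fun j hj => (le_sup hj).trans le_sup_right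
  have hcleared : 2 ^ N * k + ∑ i, 2 ^ (N - d i) = 2 ^ N * m + ∑ j, 2 ^ (N - e j) := by
    rw [sum_add_distrib, sum_const, card_univ, Fintype.card_fin, nsmul_one] at heq
    refine Nat.cast_injective (R := ℚ) ?_
    push_cast [← zpow_mul_sum_zpow_neg (K := ℚ) two_ne_zero univ d hdN,
      ← zpow_mul_sum_zpow_neg (K := ℚ) two_ne_zero univ e heN]
    linear_combination (2 : ℚ) ^ N * heq
  have hmod : ∑ i, 2 ^ (N - d i) ≡ ∑ j, 2 ^ (N - e j) [MOD 2 ^ N] := by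
    rw [Nat.ModEq, ← Nat.mul_add_mod_self_left, hcleared, Nat.mul_add_mod_self_left]
  have hinj : Set.InjOn (fun j => N - e j) (univ : Finset (Fin ℓ)) := fun j _ j' _ h =>
    he.injective (by have := heN j (mem_univ _); have := heN j' (mem_univ _); simp at h; omega)
  have hlt : ∀ j ∈ univ, N - e j < N := fun j hj => by have := he1 j; have := heN j hj; omega
  simpa using Nat.card_le_card_of_sum_prime_pow_modEq 2 hinj hlt hmod

/-- Summing-up lemma for the numbers `1 + 2^(-d i)`. -/
theorem summing_up_12 (k ℓ m : ℕ) (d : Fin k → ℕ) (hd : Monotone d) (hd1 : ∀ i, 1 ≤ d i)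
    (e : Fin ℓ → ℕ) (he : StrictMono e) (he1 : ∀ j, 1 ≤ e j)
    (heq : ∑ i : Fin k, ((1 : ℚ) + 2 ^ (-(d i : ℤ))) =
           (m : ℚ) + ∑ j : Fin ℓ, (2 : ℚ) ^ (-(e j : ℤ))) :
    ℓ ≤ k :=
  summing_up_12_general k ℓ m d e he he1 heq
end
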